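/- Regular pure erotetic implication is transitive: if Q regularly and purely implies Q1, and Q1 regularly and purely implies Q2, then Q regularly and purely implies Q2. -/
import Mathlib

inductive PForm where
  | atom : ℕ → PForm
  | neg : PForm → PForm
  | conj : PForm → PForm → PForm
  | disj : PForm → PForm → PForm
  | impl : PForm → PForm → PForm
deriving DecidableEq

def PForm.eval (v : ℕ → Bool) : PForm → Bool
  | .atom n => v n
  | .neg A => !(A.eval v)
  | .conj A B => A.eval v && B.eval v
  | .disj A B => A.eval v || B.eval v
  | .impl A B => !(A.eval v) || B.eval v

/-- Single-conclusion entailment. -/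
def scEnt (X : Set PForm) (B : PForm) : Prop :=
  ∀ v : ℕ → Bool, (∀ A ∈ X, A.eval v = true) → B.eval v = true

/-- Multiple-conclusion entailment. -/
def mcEnt (X Y : Set PForm) : Prop :=
  ∀ v : ℕ → Bool, (∀ A ∈ X, A.eval v = true) → ∃ B ∈ Y, B.eval v = true

/-- Regular pure erotetic implication. -/
def PureRegImp (dQ dQ1 : Set PForm) : Prop :=
  (∀ A ∈ dQ, mcEnt {A} dQ1) ∧
  (∀ B ∈ dQ1, ∃ A ∈ dQ, scEnt {B} A)

theorem pureRegImp_trans (dQ dQ1 dQ2 : Set PForm)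
    (hQ : dQ.Finite) (hQne : dQ.Nonempty)
    (hQ1 : dQ1.Finite) (hQ1ne : dQ1.Nonempty)
    (hQ2 : dQ2.Finite) (hQ2ne : dQ2.Nonempty)
    (h1 : PureRegImp dQ dQ1) (h2 : PureRegImp dQ1 dQ2) :
    PureRegImp dQ dQ2 := by
  obtain ⟨h1a, h1b⟩ := h1
  obtain ⟨h2a, h2b⟩ := h2
  constructor
  · intro A hA v hv
    obtain ⟨B, hB, hBv⟩ := h1a A hA v hv
    exact h2a B hB v (by simpa using hBv)
  · intro C hC
    obtain ⟨B, hB, hCB⟩ := h2b C hC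
    obtain ⟨A, hA, hBA⟩ := h1b B hB
    exact ⟨A, hA, fun v hv => hBA v (by simp [hCB v hv])⟩
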